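/- Sign of the solution of the elliptic boundary value problem on [0,L] for L < π/2: Let 0 < L < π/2, let g : [0,L] → ℝ be continuous with g ≥ 0, and let G : [0,L] → ℝ be twice continuously differentiable with 4G + G'' = g on [0,L] and G(0) = G(L) = 0. Then G ≤ 0 on [0,L], and consequently G'' ≥ g on [0,L]. -/

import Mathlib

/-!
With `φ θ = cos (2θ - L)`, a solution of `φ'' + 4φ = 0` that is positive on `[0, L]` because
`L < π/2`, the Wronskian `W = G'φ - Gφ'` satisfies `W' = gφ ≥ 0`, so it is monotone. Hence
`(G/φ)' = W/φ²` changes sign at most once, from `-` to `+`, and `G/φ` is bounded on `[0, L]` by its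
boundary values, which vanish.
-/

open Set Real

theorem le_max_of_hasDerivWithinAt_mul_of_monotoneOn {a b θ : ℝ} {w F c : ℝ → ℝ}
    (hw : ∀ x ∈ Icc a b, HasDerivWithinAt w (F x * c x) (Icc a b) x)
    (hF : MonotoneOn F (Icc a b)) (hc : ∀ x ∈ Icc a b, 0 ≤ c x) (hθ : θ ∈ Icc a b) :
    w θ ≤ max (w a) (w b) := by
  have hw_cont : ContinuousOn w (Icc a b) := fun x hx => (hw x hx).continuousWithinAt
  rcases le_or_gt (F θ) 0 with hFθ | hFθ
  · have hsub : Icc a θ ⊆ Icc a b := Icc_subset_Icc_right hθ.2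
    have hanti : AntitoneOn w (Icc a θ) := by
      refine antitoneOn_of_hasDerivWithinAt_nonpos (convex_Icc a θ) (hw_cont.mono hsub)
        (fun x hx => (hw x (hsub (interior_subset hx))).mono (interior_subset.trans hsub))
        (fun x hx => ?_)
      rw [interior_Icc] at hx
      have hxs := hsub (Ioo_subset_Icc_self hx)
      exact mul_nonpos_of_nonpos_of_nonneg ((hF hxs hθ hx.2.le).trans hFθ) (hc x hxs)
    exact (hanti (left_mem_Icc.2 hθ.1) (right_mem_Icc.2 hθ.1) hθ.1).trans (le_max_left _ _)
  · have hsub : Icc θ b ⊆ Icc a b := Icc_subset_Icc_left hθ.1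
    have hmono : MonotoneOn w (Icc θ b) := by
      refine monotoneOn_of_hasDerivWithinAt_nonneg (convex_Icc θ b) (hw_cont.mono hsub)
        (fun x hx => (hw x (hsub (interior_subset hx))).mono (interior_subset.trans hsub))
        (fun x hx => ?_)
      rw [interior_Icc] at hx
      have hxs := hsub (Ioo_subset_Icc_self hx)
      exact mul_nonneg (hFθ.le.trans (hF hθ hxs hx.1.le)) (hc x hxs)
    exact (hmono (left_mem_Icc.2 hθ.2) (right_mem_Icc.2 hθ.2) hθ.2).trans (le_max_right _ _)

theorem nonpos_of_deriv2_add_mul_nonneg_of_pos_solution {a b k : ℝ} {G G' G'' φ φ' g : ℝ → ℝ}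
    (hG : ∀ x ∈ Icc a b, HasDerivWithinAt G (G' x) (Icc a b) x)
    (hG' : ∀ x ∈ Icc a b, HasDerivWithinAt G' (G'' x) (Icc a b) x)
    (hφ : ∀ x ∈ Icc a b, HasDerivWithinAt φ (φ' x) (Icc a b) x)
    (hφ' : ∀ x ∈ Icc a b, HasDerivWithinAt φ' (-k * φ x) (Icc a b) x)
    (hφ_pos : ∀ x ∈ Icc a b, 0 < φ x)
    (hGg : ∀ x ∈ Icc a b, k * G x + G'' x = g x) (hg : ∀ x ∈ Icc a b, 0 ≤ g x)
    (ha : G a = 0) (hb : G b = 0) {θ : ℝ} (hθ : θ ∈ Icc a b) :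
    G θ ≤ 0 := by
  set W : ℝ → ℝ := fun x => G' x * φ x - G x * φ' x
  have hW : ∀ x ∈ Icc a b, HasDerivWithinAt W (g x * φ x) (Icc a b) x := by
    intro x hx
    refine (((hG' x hx).mul (hφ x hx)).sub ((hG x hx).mul (hφ' x hx))).congr_deriv ?_
    rw [← hGg x hx]
    ring
  have hW_mono : MonotoneOn W (Icc a b) :=
    monotoneOn_of_hasDerivWithinAt_nonneg (convex_Icc a b)
      (fun x hx => (hW x hx).continuousWithinAt)
      (fun x hx => (hW x (interior_subset hx)).mono interior_subset)
      (fun x hx => mul_nonneg (hg x (interior_subset hx)) (hφ_pos x (interior_subset hx)).le)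
  have hquot : ∀ x ∈ Icc a b,
      HasDerivWithinAt (fun y => G y / φ y) (W x * (φ x ^ 2)⁻¹) (Icc a b) x :=
    fun x hx => (hG x hx).div (hφ x hx) (hφ_pos x hx).ne'
  have hquot_le : G θ / φ θ ≤ 0 := by
    simpa [ha, hb] using
      le_max_of_hasDerivWithinAt_mul_of_monotoneOn hquot hW_mono (fun x _ => by positivity) hθ
  simpa using (div_le_iff₀ (hφ_pos θ hθ)).mp hquot_le

theorem hasDerivAt_cos_two_mul_sub (L x : ℝ) :
    HasDerivAt (fun y => cos (2 * y - L)) (-2 * sin (2 * x - L)) x := by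
  refine (((hasDerivAt_id x).const_mul 2).sub_const L |>.cos).congr_deriv ?_
  simp only [id]
  ring

theorem hasDerivAt_neg_two_mul_sin_two_mul_sub (L x : ℝ) :
    HasDerivAt (fun y => -2 * sin (2 * y - L)) (-4 * cos (2 * x - L)) x := by
  refine ((((hasDerivAt_id x).const_mul 2).sub_const L |>.sin).const_mul (-2)).congr_deriv ?_
  simp only [id]
  ring

theorem cos_two_mul_sub_pos {L x : ℝ} (hL : L < π / 2) (hx : x ∈ Icc 0 L) :
    0 < cos (2 * x - L) :=
  cos_pos_of_mem_Ioo ⟨by linarith [hx.1], by linarith [hx.2]⟩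

theorem elliptic_bvp_sign
    (L : ℝ) (hL0 : 0 < L) (hL : L < π/2)
    (g G : ℝ → ℝ)
    (hgpos : ∀ θ ∈ Icc (0:ℝ) L, 0 ≤ g θ)
    (hGC2 : ContDiffOn ℝ 2 G (Icc 0 L))
    (hGeq : ∀ θ ∈ Icc (0:ℝ) L, 4 * G θ + iteratedDerivWithin 2 G (Icc 0 L) θ = g θ)
    (hbc0 : G 0 = 0) (hbcL : G L = 0) :
    ∀ θ ∈ Icc (0:ℝ) L, G θ ≤ 0 ∧ g θ ≤ iteratedDerivWithin 2 G (Icc 0 L) θ := by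
  have hG' : ContDiffOn ℝ 1 (derivWithin G (Icc 0 L)) (Icc 0 L) :=
    hGC2.derivWithin (uniqueDiffOn_Icc hL0) (by norm_num)
  have hG'' : iteratedDerivWithin 2 G (Icc 0 L) =
      derivWithin (derivWithin G (Icc 0 L)) (Icc 0 L) := by
    rw [iteratedDerivWithin_succ', iteratedDerivWithin_one]
  intro θ hθ
  have hGθ : G θ ≤ 0 :=
    nonpos_of_deriv2_add_mul_nonneg_of_pos_solution (k := 4)
      (fun x hx => (hGC2.differentiableOn (by norm_num) x hx).hasDerivWithinAt)
      (fun x hx => (hG'.differentiableOn one_ne_zero x hx).hasDerivWithinAt)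
      (fun x _ => (hasDerivAt_cos_two_mul_sub L x).hasDerivWithinAt)
      (fun x _ => (hasDerivAt_neg_two_mul_sin_two_mul_sub L x).hasDerivWithinAt)
      (fun x hx => cos_two_mul_sub_pos hL hx) (hG'' ▸ hGeq) hgpos hbc0 hbcL hθ
  exact ⟨hGθ, by linarith [hGeq θ hθ]⟩
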